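/- For every density matrix σ on ℂ² ⊗ ℂ², with x_{jk} = ⟨φʲ, σ φᵏ⟩, one has (1/6)·Tr((σ ⊗ σ)·(L₃⁺ + L₃⁻)) − (1/9)·Tr((σ ⊗ σ)·(K₅⁺ + K₁⁺ + K₃⁻)) = (1/3)·(x₀₀ − (x₁₁+x₂₂+x₃₃)/3)·(x₁₁+x₂₂+x₃₃); consequently, if x₀₀ = ⟨φ⁰, σ φ⁰⟩ ≥ 1/4 then (1/9)·Tr((σ ⊗ σ)·(K₅⁺ + K₁⁺ + K₃⁻)) ≤ (1/6)·Tr((σ ⊗ σ)·(L₃⁺ + L₃⁻)). -/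

import Mathlib

open Matrix
open scoped Matrix Kronecker ComplexOrder

noncomputable section

/-- Index type of `ℂ² ⊗ ℂ²`. -/
abbrev Q : Type := Fin 2 × Fin 2

/-- The standard basis vector `|ab⟩` of `ℂ² ⊗ ℂ²`. -/
def ket (a b : Fin 2) : Q → ℂ := fun p => if p = (a, b) then 1 else 0

/-- The Bell basis `φ⁰, φ¹, φ², φ³` of `ℂ² ⊗ ℂ²`. -/
def bell : Fin 4 → Q → ℂ
  | 0 => fun p => (ket 0 0 p + ket 1 1 p) / (Real.sqrt 2 : ℂ)
  | 1 => fun p => Complex.I * (ket 0 1 p + ket 1 0 p) / (Real.sqrt 2 : ℂ)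
  | 2 => fun p => (-ket 0 1 p + ket 1 0 p) / (Real.sqrt 2 : ℂ)
  | 3 => fun p => Complex.I * (ket 0 0 p - ket 1 1 p) / (Real.sqrt 2 : ℂ)

/-- The product basis `e^{jk} = φʲ ⊗ φᵏ` of `(ℂ²⊗ℂ²)⊗(ℂ²⊗ℂ²)`. -/
def e (j k : Fin 4) : Q × Q → ℂ := fun pq => bell j pq.1 * bell k pq.2

/-- Rank-one operator `|v⟩⟨v|`. -/
def outer {m : Type*} (v : m → ℂ) : Matrix m m ℂ := vecMulVec v (star v)

/-- Orthogonal projection onto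
`span{e^{jk}+e^{kj} : 1≤j<k≤3} ∪ {e^{11}−e^{22}, e^{22}−e^{33}}`. -/
def K5 : Matrix (Q × Q) (Q × Q) ℂ :=
  (1 / 2 : ℂ) • (outer (e 1 2 + e 2 1) + outer (e 2 3 + e 3 2) + outer (e 3 1 + e 1 3)) +
    (1 / 2 : ℂ) • outer (e 1 1 - e 2 2) +
    (1 / 6 : ℂ) • outer (e 1 1 + e 2 2 - (2 : ℂ) • e 3 3)

/-- Orthogonal projection onto `span{e^{11}+e^{22}+e^{33}}`. -/
def K1 : Matrix (Q × Q) (Q × Q) ℂ :=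
  (1 / 3 : ℂ) • outer (e 1 1 + e 2 2 + e 3 3)

/-- Orthogonal projection onto `span{e^{jk}−e^{kj} : 1≤j<k≤3}`. -/
def K3m : Matrix (Q × Q) (Q × Q) ℂ :=
  (1 / 2 : ℂ) • (outer (e 1 2 - e 2 1) + outer (e 2 3 - e 3 2) + outer (e 3 1 - e 1 3))

/-- Orthogonal projection onto `span{e^{00}}`. -/
def L1 : Matrix (Q × Q) (Q × Q) ℂ := outer (e 0 0)

/-- Orthogonal projection onto `span{e^{0j}+e^{j0} : j=1,2,3}`. -/
def L3p : Matrix (Q × Q) (Q × Q) ℂ :=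
  (1 / 2 : ℂ) • (outer (e 0 1 + e 1 0) + outer (e 0 2 + e 2 0) + outer (e 0 3 + e 3 0))

/-- Orthogonal projection onto `span{e^{0j}−e^{j0} : j=1,2,3}`. -/
def L3m : Matrix (Q × Q) (Q × Q) ℂ :=
  (1 / 2 : ℂ) • (outer (e 0 1 - e 1 0) + outer (e 0 2 - e 2 0) + outer (e 0 3 - e 3 0))

/-- The matrix elements `x_{jk} = ⟨φʲ, σ φᵏ⟩` of a state `σ` in the Bell basis. -/
def x (σ : Matrix Q Q ℂ) (j k : Fin 4) : ℂ := star (bell j) ⬝ᵥ σ.mulVec (bell k)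

/-! In the product basis `e^{jk}` the operator `σ ⊗ σ` has matrix elements
`⟨e^{jk}, (σ⊗σ) e^{j'k'}⟩ = x_{jj'} x_{kk'}`, and each projection is a sum of rank-one operators
on combinations of the `e^{jk}`, so both traces are explicit quadratic polynomials in the `x_{jk}`
and the identity is a ring identity. For the inequality, positivity of `σ` makes the diagonal
entries `x_{jj}` nonnegative (in particular real) and completeness of the Bell basis makes them
sum to `Tr σ = 1`; with `s = x₁₁ + x₂₂ + x₃₃ = 1 - x₀₀` the right-hand side is
`(1/9)(4x₀₀ - 1) s ≥ 0`. -/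

lemma trace_mul_outer {n : Type*} [Fintype n] (M : Matrix n n ℂ) (v : n → ℂ) :
    (M * outer v).trace = star v ⬝ᵥ M *ᵥ v := by
  simp only [trace, Matrix.mul_apply, outer, vecMulVec_apply, mulVec, dotProduct, diag_apply,
    Pi.star_apply, Finset.mul_sum]
  exact Finset.sum_congr rfl fun i _ => Finset.sum_congr rfl fun j _ => by ring

lemma star_e_dotProduct_kronecker_mulVec_e (σ : Matrix Q Q ℂ) (j k j' k' : Fin 4) :
    star (e j k) ⬝ᵥ (σ ⊗ₖ σ) *ᵥ e j' k' = x σ j j' * x σ k k' := by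
  simp only [e, x, dotProduct, mulVec, kroneckerMap_apply, Fintype.sum_prod_type,
    Pi.star_apply, star_mul', Fin.sum_univ_two]
  ring

lemma sum_outer_bell : ∑ j, outer (bell j) = 1 := by
  have hinv : (Real.sqrt 2 : ℂ)⁻¹ * (Real.sqrt 2 : ℂ)⁻¹ = 2⁻¹ := by
    rw [← mul_inv, ← Complex.ofReal_mul, Real.mul_self_sqrt zero_le_two, Complex.ofReal_ofNat]
  ext ⟨a, b⟩ ⟨c, d⟩
  fin_cases a <;> fin_cases b <;> fin_cases c <;> fin_cases d <;>
    norm_num [Fin.sum_univ_four, outer, bell, ket, vecMulVec_apply, div_eq_mul_inv, hinv,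
      mul_mul_mul_comm, Complex.I_mul_I]

lemma sum_x_self (σ : Matrix Q Q ℂ) : ∑ j, x σ j j = σ.trace := by
  simp only [x, ← trace_mul_outer, ← trace_sum, ← Matrix.mul_sum, sum_outer_bell, Matrix.mul_one]

lemma x_self_nonneg {σ : Matrix Q Q ℂ} (hσ : σ.PosSemidef) (j : Fin 4) : 0 ≤ x σ j j :=
  hσ.dotProduct_mulVec_nonneg (bell j)

lemma trace_L3_sub_trace_K (σ : Matrix Q Q ℂ) :
    (1 / 6 : ℂ) * ((σ ⊗ₖ σ) * (L3p + L3m)).trace -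
        (1 / 9 : ℂ) * ((σ ⊗ₖ σ) * (K5 + K1 + K3m)).trace =
      (1 / 3 : ℂ) * (x σ 0 0 - (x σ 1 1 + x σ 2 2 + x σ 3 3) / 3) *
        (x σ 1 1 + x σ 2 2 + x σ 3 3) := by
  simp only [K5, K1, K3m, L3p, L3m, Matrix.mul_add, Matrix.mul_smul, trace_add, trace_smul,
    trace_mul_outer, smul_eq_mul, star_add, star_sub, star_smul, Matrix.mulVec_add,
    Matrix.mulVec_sub, Matrix.mulVec_smul, add_dotProduct, sub_dotProduct, smul_dotProduct,
    dotProduct_add, dotProduct_sub, dotProduct_smul, star_e_dotProduct_kronecker_mulVec_e,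
    Complex.star_def, map_ofNat]
  ring

/-- `(1/6) Tr((σ⊗σ)(L₃⁺+L₃⁻)) − (1/9) Tr((σ⊗σ)(K₅⁺+K₁⁺+K₃⁻))
  = (1/3)(x₀₀ − (x₁₁+x₂₂+x₃₃)/3)(x₁₁+x₂₂+x₃₃)`;
consequently if `x₀₀ ≥ 1/4` then
`(1/9) Tr((σ⊗σ)(K₅⁺+K₁⁺+K₃⁻)) ≤ (1/6) Tr((σ⊗σ)(L₃⁺+L₃⁻))`. -/
theorem stmt14 (σ : Matrix Q Q ℂ) (hσ : σ.PosSemidef) (htr : σ.trace = 1) :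
    ((1 / 6 : ℂ) * ((σ ⊗ₖ σ) * (L3p + L3m)).trace -
        (1 / 9 : ℂ) * ((σ ⊗ₖ σ) * (K5 + K1 + K3m)).trace =
      (1 / 3 : ℂ) * (x σ 0 0 - (x σ 1 1 + x σ 2 2 + x σ 3 3) / 3) *
        (x σ 1 1 + x σ 2 2 + x σ 3 3)) ∧
    ((1 / 4 : ℝ) ≤ (x σ 0 0).re →
      (1 / 9 : ℝ) * (((σ ⊗ₖ σ) * (K5 + K1 + K3m)).trace).re ≤
        (1 / 6 : ℝ) * (((σ ⊗ₖ σ) * (L3p + L3m)).trace).re) := by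
  refine ⟨trace_L3_sub_trace_K σ, fun h => ?_⟩
  have hs : 0 ≤ x σ 1 1 + x σ 2 2 + x σ 3 3 :=
    add_nonneg (add_nonneg (x_self_nonneg hσ 1) (x_self_nonneg hσ 2)) (x_self_nonneg hσ 3)
  have hsum : x σ 0 0 + (x σ 1 1 + x σ 2 2 + x σ 3 3) = 1 := by
    rw [← htr, ← sum_x_self, Fin.sum_univ_four]; ring
  have hx0 : (1 / 4 : ℂ) ≤ x σ 0 0 :=
    Complex.le_def.mpr ⟨by simpa using h, by simpa using (Complex.le_def.mp (x_self_nonneg hσ 0)).2⟩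
  have hgap : 0 ≤ x σ 0 0 - (x σ 1 1 + x σ 2 2 + x σ 3 3) / 3 := by
    rw [show x σ 0 0 - (x σ 1 1 + x σ 2 2 + x σ 3 3) / 3 = 4 / 3 * (x σ 0 0 - 1 / 4) by
      linear_combination (-1 / 3 : ℂ) * hsum]
    exact mul_nonneg (by positivity) (sub_nonneg.mpr hx0)
  have hdiff := mul_nonneg (mul_nonneg (by positivity : (0 : ℂ) ≤ 1 / 3) hgap) hs
  rw [← trace_L3_sub_trace_K] at hdiff
  have hre := (Complex.le_def.mp hdiff).1
  norm_num at hre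
  linarith
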